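/- (Time-space harmonic polynomials for random walks.) Let (M_k)_{k≥1} be independent, identically distributed real-valued random variables on a probability space with E[|M_1|^j] < ∞ for every j ≥ 1, set S_0 = 0 and S_n = M_1 + ⋯ + M_n, let a_j = E[M_1^j] (a_0 = 1), and let (F_n)_{n≥0} be the natural filtration of the process (S_n). For an integer t define q_0(t) = 1 and q_j(t) = ∑_{λ ⊢ j} (t)_{ν_λ} d_λ a_λ for j ≥ 1, and for each i ≥ 1 define the polynomial Q_i(x, n) = ∑_{j=0}^{i} binom(i,j) q_{i−j}(−n) x^j. Then for every i ≥ 1 the process (Q_i(S_n, n))_{n≥0} is a martingale with respect to (F_n); in particular, E[Q_i(S_n, n) | F_s] = Q_i(S_s, s) almost surely for all 0 ≤ s ≤ n, and E[Q_i(S_n, n)] = 0 for all n ≥ 1. -/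

import Mathlib

/-!
For `t ∈ ℕ`, `q_m(t)` is the `m`-th moment of a sum of `t` independent copies of `M`, so
`q_m(t + 1) = ∑_r C(m, r) a_r q_{m-r}(t)`; being polynomial in `t`, this recursion holds for all
`t`, and combinatorially it comes from `(t + 1)_k = (t)_k + k (t)_{k-1}`. Conditionally on `F_n`,
`S_{n+1} = S_n + M_n` with `M_n` independent of `F_n`, so
`E[(S_n + M_n)^j | F_n] = ∑_k C(j, k) a_{j-k} S_n^k`. Substituting this into `Q_i(S_{n+1}, n + 1)`
and applying the recursion at `t = -(n + 1)` gives `Q_i(S_n, n)`. Finally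
`E[Q_i(S_n, n)] = Q_i(0, 0) = q_i(0) = 0`, because `(0)_k = 0` for `k ≥ 1`.
-/

open MeasureTheory ProbabilityTheory Finset Polynomial

/-- `dcoef λ = j! / ((1!)^{r_1}(2!)^{r_2}⋯ r_1! r_2! ⋯)`, the number of set partitions of a
`j`-element set whose block sizes are the parts of the integer partition `λ`. -/
noncomputable def dcoef {j : ℕ} (lam : Nat.Partition j) : ℝ :=
  (Nat.factorial j : ℝ) /
    ((lam.parts.map fun p => (Nat.factorial p : ℝ)).prod *
     ∏ r ∈ lam.parts.toFinset, (Nat.factorial (lam.parts.count r) : ℝ))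

open scoped Nat

theorem descPochhammer_eval_add_one {R : Type*} [CommRing R] (k : ℕ) (x : R) :
    (descPochhammer R k).eval (x + 1)
      = (descPochhammer R k).eval x + k * (descPochhammer R (k - 1)).eval x := by
  cases k with
  | zero => simp
  | succ k =>
    have hshift :
        (descPochhammer R (k + 1)).eval (x + 1) = (x + 1) * (descPochhammer R k).eval x := by
      simp [descPochhammer_succ_left, eval_comp]
    rw [hshift, descPochhammer_succ_eval, Nat.add_sub_cancel]
    push_cast
    ring

theorem Multiset.prod_factorial_count_cons (r : ℕ) (s : Multiset ℕ) :
    ∏ p ∈ (r ::ₘ s).toFinset, ((r ::ₘ s).count p)!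
      = (s.count r + 1) * ∏ p ∈ s.toFinset, (s.count p)! := by
  have hcount : ∀ p ∈ s.toFinset.erase r, ((r ::ₘ s).count p)! = (s.count p)! := fun p hp => by
    rw [Multiset.count_cons_of_ne (Finset.ne_of_mem_erase hp)]
  rw [Multiset.toFinset_cons, ← Finset.mul_prod_erase _ _ (Finset.mem_insert_self r _),
    Finset.erase_insert_eq_erase, Finset.prod_congr rfl hcount, Multiset.count_cons_self,
    Nat.factorial_succ]
  by_cases hr : r ∈ s.toFinset
  · rw [← Finset.mul_prod_erase _ _ hr, mul_assoc]
  · rw [Finset.erase_eq_of_notMem hr, Multiset.count_eq_zero.2 (by simpa using hr)]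
    simp

theorem dcoef_mul_count_of_parts_eq_cons {m r : ℕ} (hrm : r ≤ m) {lam : Nat.Partition m}
    {mu : Nat.Partition (m - r)} (hlam : lam.parts = r ::ₘ mu.parts) :
    (lam.parts.count r : ℝ) * dcoef lam = (m.choose r : ℝ) * dcoef mu := by
  unfold dcoef
  have hcount := congrArg (Nat.cast (R := ℝ)) (Multiset.prod_factorial_count_cons r mu.parts)
  push_cast at hcount
  rw [hlam, Multiset.map_cons, Multiset.prod_cons, hcount, Multiset.count_cons_self,
    Nat.cast_choose ℝ hrm]
  have hA : 0 < (mu.parts.map fun p => (p ! : ℝ)).prod :=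
    Multiset.prod_pos fun x hx => by
      obtain ⟨p, _, rfl⟩ := Multiset.mem_map.1 hx
      positivity
  have hB : 0 < ∏ p ∈ mu.parts.toFinset, ((mu.parts.count p)! : ℝ) :=
    Finset.prod_pos fun p _ => by positivity
  push_cast
  field_simp

theorem Nat.Partition.sum_sum_toFinset_parts {M : Type*} [AddCommMonoid M] {m : ℕ}
    (F : Nat.Partition m → ℕ → M) :
    ∑ lam, ∑ r ∈ lam.parts.toFinset, F lam r
      = ∑ r ∈ Finset.Icc 1 m, ∑ lam : {lam : Nat.Partition m // r ∈ lam.parts}, F lam r := by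
  rw [Finset.sum_comm' (t' := Finset.Icc 1 m) (s' := fun r => univ.filter (r ∈ ·.parts))]
  · exact Finset.sum_congr rfl fun r _ => Finset.sum_subtype _ (by simp) _
  · intro lam r
    simp only [Multiset.mem_toFinset, Finset.mem_univ, true_and, Finset.mem_filter,
      Finset.mem_Icc]
    exact ⟨fun hr => ⟨hr, lam.parts_pos hr, Nat.Partition.le_of_mem_parts hr⟩, And.left⟩

/-- `partitionPoly a m x` is `q_m(x)`, as a function of a real variable. -/
noncomputable def partitionPoly (a : ℕ → ℝ) (m : ℕ) (x : ℝ) : ℝ :=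
  ∑ lam : Nat.Partition m,
    (descPochhammer ℝ lam.parts.card).eval x * dcoef lam * (lam.parts.map a).prod

theorem partitionPoly_zero (a : ℕ → ℝ) {m : ℕ} (hm : m ≠ 0) : partitionPoly a m 0 = 0 := by
  refine Finset.sum_eq_zero fun lam _ => ?_
  have hne : lam.parts ≠ 0 := fun h => hm (by simpa [h] using lam.parts_sum.symm)
  obtain ⟨c, hc⟩ := Nat.exists_eq_add_one_of_ne_zero (Multiset.card_pos.2 hne).ne'
  simp [hc, descPochhammer_succ_left]

theorem count_mul_partitionPoly_term_of_parts_eq_cons (a : ℕ → ℝ) (x : ℝ) {m r : ℕ}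
    (hrm : r ≤ m) {lam : Nat.Partition m} {mu : Nat.Partition (m - r)}
    (hlam : lam.parts = r ::ₘ mu.parts) :
    (lam.parts.count r : ℝ) *
        ((descPochhammer ℝ (lam.parts.card - 1)).eval x * dcoef lam * (lam.parts.map a).prod)
      = (m.choose r : ℝ) * a r *
        ((descPochhammer ℝ mu.parts.card).eval x * dcoef mu * (mu.parts.map a).prod) := by
  have hd := dcoef_mul_count_of_parts_eq_cons hrm hlam
  rw [hlam, Multiset.card_cons, Nat.add_sub_cancel, Multiset.map_cons, Multiset.prod_cons] at *
  linear_combination ((descPochhammer ℝ mu.parts.card).eval x * a r * (mu.parts.map a).prod) * hd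

/-- In `(x + 1)_k = (x)_k + k (x)_{k-1}` the factor `k` picks one of the `k` parts of `λ`;
removing that part, of size `r`, leaves a partition of `m - r`. -/
theorem partitionPoly_add_one (a : ℕ → ℝ) (ha0 : a 0 = 1) (m : ℕ) (x : ℝ) :
    partitionPoly a m (x + 1)
      = ∑ r ∈ Finset.range (m + 1), (m.choose r : ℝ) * a r * partitionPoly a (m - r) x := by
  have hsplit : partitionPoly a m (x + 1) = partitionPoly a m x
      + ∑ lam : Nat.Partition m, ∑ r ∈ lam.parts.toFinset, (lam.parts.count r : ℝ) *
          ((descPochhammer ℝ (lam.parts.card - 1)).eval x * dcoef lam *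
            (lam.parts.map a).prod) := by
    rw [partitionPoly, partitionPoly, ← Finset.sum_add_distrib]
    refine Finset.sum_congr rfl fun lam _ => ?_
    rw [descPochhammer_eval_add_one, ← Finset.sum_mul, ← Nat.cast_sum,
      Multiset.toFinset_sum_count_eq]
    ring
  rw [hsplit, Finset.range_eq_Ico, Finset.sum_eq_sum_Ico_succ_bot (Nat.succ_pos m),
    Nat.Partition.sum_sum_toFinset_parts]
  congr 1
  · simp [ha0]
  refine Finset.sum_congr rfl fun r hr => ?_
  obtain ⟨h1, h2⟩ := Finset.mem_Icc.1 hr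
  rw [partitionPoly, Finset.mul_sum, ← (Nat.Partition.partitionWithPartEquiv h1 h2).symm.sum_comp]
  exact Finset.sum_congr rfl fun mu _ => count_mul_partitionPoly_term_of_parts_eq_cons a x h2
    (Nat.Partition.partitionWithPartEquiv_symm_apply_parts h1 h2 mu)

theorem sum_choose_mul_sum_choose_mul_pow {R : Type*} [CommSemiring R] (f g : ℕ → R) (i : ℕ)
    (y : R) :
    ∑ j ∈ range (i + 1), (i.choose j : R) * f (i - j) *
        ∑ k ∈ range (j + 1), (j.choose k : R) * g (j - k) * y ^ k
      = ∑ k ∈ range (i + 1), (i.choose k : R) *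
          (∑ r ∈ range (i - k + 1), ((i - k).choose r : R) * g r * f (i - k - r)) * y ^ k := by
  conv_lhs => simp only [Finset.mul_sum, Finset.range_eq_Ico]
  rw [← Finset.sum_Ico_Ico_comm, Finset.range_eq_Ico]
  refine Finset.sum_congr rfl fun k hk => ?_
  have hki : k ≤ i := Nat.lt_succ_iff.1 (Finset.mem_Ico.1 hk).2
  rw [Finset.sum_Ico_eq_sum_range, show i + 1 - k = i - k + 1 by omega, Finset.mul_sum,
    Finset.sum_mul]
  refine Finset.sum_congr rfl fun r hr => ?_
  have hri : r ≤ i - k := Nat.lt_succ_iff.1 (Finset.mem_range.1 hr)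
  have hchoose : (i.choose (k + r) : R) * ((k + r).choose k : R)
      = (i.choose k : R) * ((i - k).choose r : R) := by
    rw [← Nat.cast_mul, Nat.choose_mul (Nat.le_add_right k r), Nat.cast_mul,
      Nat.add_sub_cancel_left]
  rw [show i - (k + r) = i - k - r by omega, Nat.add_sub_cancel_left]
  calc (i.choose (k + r) : R) * f (i - k - r) * ((k + r).choose k * g r * y ^ k)
      = (i.choose (k + r) : R) * ((k + r).choose k) * (g r * f (i - k - r) * y ^ k) := by ring
    _ = _ := by rw [hchoose]; ring

section Moments

variable {Ω : Type*} {mΩ : MeasurableSpace Ω} {μ : Measure Ω} {X Y : Ω → ℝ}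

theorem ProbabilityTheory.IndepFun.integrable_pow_mul_pow (hXY : IndepFun X Y μ) {k l : ℕ}
    (hX : Integrable (fun ω => X ω ^ k) μ) (hY : Integrable (fun ω => Y ω ^ l) μ) :
    Integrable (fun ω => X ω ^ k * Y ω ^ l) μ :=
  (hXY.comp (measurable_id.pow_const k) (measurable_id.pow_const l)).integrable_mul hX hY

theorem ProbabilityTheory.IndepFun.integrable_add_pow (hXY : IndepFun X Y μ)
    (hX : ∀ k, Integrable (fun ω => X ω ^ k) μ) (hY : ∀ k, Integrable (fun ω => Y ω ^ k) μ)
    (j : ℕ) : Integrable (fun ω => (X ω + Y ω) ^ j) μ := by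
  simp_rw [add_pow]
  exact integrable_finsetSum _ fun k _ => (hXY.integrable_pow_mul_pow (hX k) (hY _)).mul_const _

variable {m : MeasurableSpace Ω}

theorem indepFun_of_indep_comap (hX : Measurable[m] X)
    (hind : Indep (MeasurableSpace.comap Y inferInstance) m μ) : IndepFun X Y μ :=
  (IndepFun_iff_Indep X Y μ).2 (indep_of_indep_of_le_left hind.symm hX.comap_le)

theorem condExp_finsetSum_const_mul {ι : Type*} {s : Finset ι} (c : ι → ℝ) {F G : ι → Ω → ℝ}
    (hF : ∀ k ∈ s, Integrable (F k) μ) (hFG : ∀ k ∈ s, μ[F k | m] =ᵐ[μ] G k) :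
    μ[fun ω => ∑ k ∈ s, c k * F k ω | m] =ᵐ[μ] fun ω => ∑ k ∈ s, c k * G k ω := by
  have hsum : (fun ω => ∑ k ∈ s, c k * F k ω) = ∑ k ∈ s, c k • F k := by
    ext ω
    simp [Finset.sum_apply]
  rw [hsum]
  refine (condExp_finsetSum (fun k hk => (hF k hk).smul (c k)) m).trans ?_
  refine (eventuallyEq_sum fun k hk => (condExp_smul (c k) (F k) m).trans
    ((hFG k hk).const_smul (c k))).trans (ae_of_all _ fun ω => ?_)
  simp [Finset.sum_apply]

variable [IsFiniteMeasure μ]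

theorem condExp_pow_mul_pow_of_indep (hm : m ≤ mΩ) (hX : StronglyMeasurable[m] X)
    (hY : Measurable[mΩ] Y) (hind : Indep (MeasurableSpace.comap Y inferInstance) m μ)
    {k l : ℕ} (hXk : Integrable (fun ω => X ω ^ k) μ) (hYl : Integrable (fun ω => Y ω ^ l) μ) :
    μ[fun ω => X ω ^ k * Y ω ^ l | m] =ᵐ[μ] fun ω => X ω ^ k * ∫ ω', Y ω' ^ l ∂μ := by
  have hYl_indep : μ[fun ω => Y ω ^ l | m] =ᵐ[μ] fun _ => ∫ ω', Y ω' ^ l ∂μ :=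
    condExp_indep_eq hY.comap_le hm
      ((measurable_id.pow_const l).comp (Measurable.of_comap_le le_rfl)).stronglyMeasurable hind
  refine (condExp_mul_of_stronglyMeasurable_left (f := fun ω => X ω ^ k)
    (hX.measurable.pow_const k).stronglyMeasurable
    ((indepFun_of_indep_comap hX.measurable hind).integrable_pow_mul_pow hXk hYl)
    hYl).trans ?_
  filter_upwards [hYl_indep] with ω hω
  simp [hω]

theorem condExp_add_pow_of_indep (hm : m ≤ mΩ) (hX : StronglyMeasurable[m] X)
    (hY : Measurable[mΩ] Y) (hind : Indep (MeasurableSpace.comap Y inferInstance) m μ)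
    (hXint : ∀ k, Integrable (fun ω => X ω ^ k) μ) (hYint : ∀ k, Integrable (fun ω => Y ω ^ k) μ)
    (j : ℕ) :
    μ[fun ω => (X ω + Y ω) ^ j | m] =ᵐ[μ] fun ω =>
      ∑ k ∈ range (j + 1), (j.choose k : ℝ) * (∫ ω', Y ω' ^ (j - k) ∂μ) * X ω ^ k := by
  have hexpand : (fun ω => (X ω + Y ω) ^ j)
      = fun ω => ∑ k ∈ range (j + 1), (j.choose k : ℝ) * (X ω ^ k * Y ω ^ (j - k)) := by
    ext ω
    simp only [add_pow, mul_comm]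
  rw [hexpand]
  refine (condExp_finsetSum_const_mul _ (fun k _ =>
    (indepFun_of_indep_comap hX.measurable hind).integrable_pow_mul_pow (hXint k) (hYint _))
    fun k _ => condExp_pow_mul_pow_of_indep hm hX hY hind (hXint k) (hYint _)).trans
    (ae_of_all _ fun ω => Finset.sum_congr rfl fun k _ => by ring)

end Moments

section RandomWalk

variable {Ω : Type*} {mΩ : MeasurableSpace Ω} {μ : Measure Ω}

theorem indep_comap_natural_of_iIndepFun {M S : ℕ → Ω → ℝ} (hM : ∀ k, Measurable (M k))
    (hindep : iIndepFun M μ) (hS : ∀ n ω, S n ω = ∑ k ∈ range n, M k ω)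
    (hSm : ∀ n, StronglyMeasurable (S n)) (n : ℕ) :
    Indep (MeasurableSpace.comap (M n) inferInstance) (Filtration.natural S hSm n) μ := by
  have hpast := indep_iSup_of_disjoint (fun k => (hM k).comap_le) hindep.iIndep
    (Set.disjoint_singleton_left.2 (Set.self_notMem_Iio (a := n)))
  rw [_root_.iSup_singleton] at hpast
  refine indep_of_indep_of_le_right hpast (iSup₂_le fun j hj => Measurable.comap_le ?_)
  rw [show S j = fun ω => ∑ k ∈ range j, M k ω from funext (hS j)]
  exact Finset.measurable_sum _ fun k hk => Measurable.of_comap_le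
    (le_biSup (fun k => MeasurableSpace.comap (M k) inferInstance)
      (Set.mem_Iio.2 (lt_of_lt_of_le (Finset.mem_range.1 hk) hj)))

variable {ℱ : Filtration ℕ mΩ} {S M : ℕ → Ω → ℝ}

theorem integrable_pow_of_indep_increments (hS : StronglyAdapted ℱ S)
    (hsucc : ∀ n ω, S (n + 1) ω = S n ω + M n ω)
    (hind : ∀ n, Indep (MeasurableSpace.comap (M n) inferInstance) (ℱ n) μ)
    (hMint : ∀ n k, Integrable (fun ω => M n ω ^ k) μ)
    (hS0 : ∀ k, Integrable (fun ω => S 0 ω ^ k) μ) (n : ℕ) :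
    ∀ k, Integrable (fun ω => S n ω ^ k) μ := by
  induction n with
  | zero => exact hS0
  | succ n ih =>
    simp_rw [hsucc]
    exact (indepFun_of_indep_comap (hS n).measurable (hind n)).integrable_add_pow ih (hMint n)

variable [IsFiniteMeasure μ]

theorem martingale_sum_choose_mul_pow_of_indep_increments (hS : StronglyAdapted ℱ S)
    (hM : ∀ n, Measurable (M n)) (hsucc : ∀ n ω, S (n + 1) ω = S n ω + M n ω)
    (hind : ∀ n, Indep (MeasurableSpace.comap (M n) inferInstance) (ℱ n) μ)
    (hMint : ∀ n k, Integrable (fun ω => M n ω ^ k) μ)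
    (hSint : ∀ n k, Integrable (fun ω => S n ω ^ k) μ)
    {a : ℕ → ℝ} (ha : ∀ n k, ∫ ω, M n ω ^ k ∂μ = a k) {c : ℕ → ℕ → ℝ}
    (hc : ∀ n m, c n m = ∑ r ∈ range (m + 1), (m.choose r : ℝ) * a r * c (n + 1) (m - r))
    (i : ℕ) :
    Martingale (fun n ω => ∑ j ∈ range (i + 1), (i.choose j : ℝ) * c n (i - j) * S n ω ^ j)
      ℱ μ := by
  refine martingale_nat (fun n => ?_) (fun n => integrable_finsetSum _ fun j _ =>
    (hSint n j).const_mul _) fun n => ?_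
  · exact (Finset.measurable_sum _ fun j _ =>
      ((hS n).measurable.pow_const j).const_mul _).stronglyMeasurable
  simp_rw [hsucc]
  refine ((condExp_finsetSum_const_mul _ (fun j _ =>
    (indepFun_of_indep_comap (hS n).measurable (hind n)).integrable_add_pow (hSint n) (hMint n) j)
    fun j _ => condExp_add_pow_of_indep (ℱ.le n) (hS n) (hM n) (hind n) (hSint n) (hMint n) j).trans
    (ae_of_all _ fun ω => ?_)).symm
  simp only [ha n, hc n]
  exact sum_choose_mul_sum_choose_mul_pow _ _ i _

end RandomWalk

/-- Time-space harmonic polynomials for random walks: with `S_n = M_1 + ⋯ + M_n` a random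
walk with i.i.d. increments having all moments, `q_j(t) = ∑_{λ ⊢ j} (t)_{ν_λ} d_λ a_λ` and
`Q_i(x, n) = ∑_{j=0}^{i} binom(i,j) q_{i−j}(−n) x^j`, the process `(Q_i(S_n, n))_n` is a
martingale with respect to the natural filtration of `(S_n)`; in particular
`E[Q_i(S_n, n) | F_s] = Q_i(S_s, s)` a.s. for `s ≤ n`, and `E[Q_i(S_n, n)] = 0` for `n ≥ 1`. -/
theorem time_space_harmonic_random_walk {Ω : Type*} {mΩ : MeasurableSpace Ω}
    (μ : Measure Ω) [IsProbabilityMeasure μ]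
    (M : ℕ → Ω → ℝ) (hMmeas : ∀ k, Measurable (M k))
    (hindep : iIndepFun M μ)
    (hident : ∀ k, IdentDistrib (M k) (M 0) μ μ)
    (hmom : ∀ j : ℕ, Integrable (fun ω => |M 0 ω| ^ j) μ)
    (a : ℕ → ℝ) (ha : ∀ j, a j = ∫ ω, (M 0 ω) ^ j ∂μ)
    (S : ℕ → Ω → ℝ) (hS : ∀ n ω, S n ω = ∑ k ∈ Finset.range n, M k ω)
    (hSm : ∀ n, StronglyMeasurable (S n))
    (q : ℤ → ℕ → ℝ)
    (hq : ∀ (t : ℤ) (j : ℕ), q t j = ∑ lam : Nat.Partition j,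
      (descPochhammer ℝ lam.parts.card).eval ((t : ℝ)) * dcoef lam * (lam.parts.map a).prod)
    (Q : ℕ → ℕ → ℝ → ℝ)
    (hQ : ∀ (i n : ℕ) (x : ℝ), Q i n x =
      ∑ j ∈ Finset.range (i + 1), (i.choose j : ℝ) * q (-(n : ℤ)) (i - j) * x ^ j)
    (i : ℕ) (hi : 1 ≤ i) :
    Martingale (fun n ω => Q i n (S n ω)) (Filtration.natural S hSm) μ ∧
    (∀ s n : ℕ, s ≤ n →
      μ[(fun ω => Q i n (S n ω)) | (Filtration.natural S hSm) s]
        =ᵐ[μ] fun ω => Q i s (S s ω)) ∧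
    (∀ n : ℕ, 1 ≤ n → ∫ ω, Q i n (S n ω) ∂μ = 0) := by
  have hq_poly : ∀ t j, q t j = partitionPoly a j t := hq
  have hMint : ∀ n k, Integrable (fun ω => M n ω ^ k) μ := fun n k =>
    ((hident n).comp (measurable_id.pow_const k)).integrable_iff.2 <| (hmom k).mono'
      ((hMmeas 0).pow_const k).aestronglyMeasurable (ae_of_all _ fun ω => by simp)
  have hmoment : ∀ n k, ∫ ω, M n ω ^ k ∂μ = a k := fun n k => by
    rw [ha]; exact ((hident n).comp (measurable_id.pow_const k)).integral_eq
  have hS0 : ∀ ω, S 0 ω = 0 := by simp [hS]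
  have hsucc : ∀ n ω, S (n + 1) ω = S n ω + M n ω := by simp [hS, Finset.sum_range_succ]
  have hind := indep_comap_natural_of_iIndepFun hMmeas hindep hS hSm
  have hadapt := Filtration.stronglyAdapted_natural hSm
  have hrec : ∀ (n : ℕ) m, q (-(n : ℤ)) m
      = ∑ r ∈ range (m + 1), (m.choose r : ℝ) * a r * q (-((n + 1 : ℕ) : ℤ)) (m - r) := by
    intro n m
    simp only [hq_poly, ← partitionPoly_add_one a (by simp [ha])]
    congr 1
    push_cast
    ring
  have hmart : Martingale (fun n ω => Q i n (S n ω)) (Filtration.natural S hSm) μ := by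
    simp only [hQ]
    exact martingale_sum_choose_mul_pow_of_indep_increments hadapt hMmeas hsucc hind hMint
      (integrable_pow_of_indep_increments hadapt hsucc hind hMint (by simp [hS0])) hmoment hrec i
  refine ⟨hmart, fun s n hsn => hmart.condExp_ae_eq hsn, fun n _ => ?_⟩
  have hconst := hmart.setIntegral_eq (Nat.zero_le n) MeasurableSet.univ
  rw [Measure.restrict_univ] at hconst
  rw [← hconst]
  simp [hQ, hS0, Finset.sum_range_succ', hq_poly, partitionPoly_zero a (by omega : i ≠ 0)]
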